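/- For every ε with 0 < ε < 1 and every integer n ≥ 2, there exist a set P of n points in ℝ³ and a finite family 𝒪 of pairwise disjoint flat axis-parallel rectangles in ℝ³ (degenerate axis-parallel boxes) disjoint from P, such that for every set E of unordered pairs of points of P that does not contain all pairs, there exist distinct p, q ∈ P with {p,q} ∉ E and d_E(p,q) > (2 − ε)·σ(p,q). In other words, every non-complete graph on P has spanning ratio larger than 2 − ε with respect to the geodesic distance amid the obstacles. -/

import Mathlib

/-!
Put the points `(0, 0, k)`, `k < n`, on the `z`-axis and between consecutive ones a large square
plate `[-L, L]² × {k + 1/2}`. A path between two of the points crosses the height of some plate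
outside that plate, so it has length at least `2L`, while a detour around the plates has length at
most `2L + n + 2`. A walk joining two non-adjacent points uses at least two edges between distinct
points, so it has length at least `4L`, and `4L > (2 - ε)(2L + n + 2)` once `εL = n + 2`.
-/

open scoped ENNReal

namespace GeoSpanner

/-- Points of `ℝ^d`. -/
abbrev Pt (d : ℕ) := Fin d → ℝ

/-- The L1 norm `‖x‖₁ = ∑ |xᵢ|`. -/
def nrm1 {d : ℕ} (x : Pt d) : ℝ := ∑ i, |x i|

/-- The Euclidean (L2) norm. -/
noncomputable def nrm2 {d : ℕ} (x : Pt d) : ℝ := Real.sqrt (∑ i, (x i) ^ 2)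

/-- An axis-parallel box: a product of closed bounded intervals. -/
def IsBox {d : ℕ} (B : Set (Pt d)) : Prop := ∃ a b : Pt d, a ≤ b ∧ B = Set.Icc a b

/-- A valid family of obstacles: finitely many pairwise disjoint closed
axis-parallel boxes. -/
def IsObstacleFamily {d : ℕ} (O : Finset (Set (Pt d))) : Prop :=
  (∀ B ∈ O, IsBox B) ∧ (O : Set (Set (Pt d))).Pairwise Disjoint

/-- The free space: points outside the interior of every obstacle. -/
def free {d : ℕ} (O : Finset (Set (Pt d))) : Set (Pt d) :=
  {x | ∀ B ∈ O, x ∉ interior B}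

/-- Length of the path `γ` restricted to `[0,1]`, measured as total variation
with respect to the norm `nrm`. -/
noncomputable def pathLen {d : ℕ} (nrm : Pt d → ℝ) (γ : ℝ → Pt d) : ℝ≥0∞ :=
  ⨆ (n : ℕ) (t : Fin (n + 1) → ℝ)
    (_ : Monotone t ∧ ∀ i, t i ∈ Set.Icc (0 : ℝ) 1),
      ∑ i : Fin n, ENNReal.ofReal (nrm (γ (t i.succ) - γ (t i.castSucc)))

/-- `γ` is a continuous path from `p` to `q` staying inside the region `F`. -/
def IsPathIn {d : ℕ} (F : Set (Pt d)) (p q : Pt d) (γ : ℝ → Pt d) : Prop :=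
  ContinuousOn γ (Set.Icc 0 1) ∧ γ 0 = p ∧ γ 1 = q ∧
    ∀ t ∈ Set.Icc (0 : ℝ) 1, γ t ∈ F

/-- Geodesic distance from `p` to `q` inside the region `F`, with path lengths
measured with respect to the norm `nrm`. -/
noncomputable def geo {d : ℕ} (nrm : Pt d → ℝ) (F : Set (Pt d)) (p q : Pt d) : ℝ≥0∞ :=
  ⨅ (γ : ℝ → Pt d) (_ : IsPathIn F p q γ), pathLen nrm γ

/-- `B(p,q)`: the closed axis-parallel box with opposite corners `p` and `q`. -/
def corners {d : ℕ} (p q : Pt d) : Set (Pt d) := Set.uIcc p q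

/-- Graph distance over the edge set `E` with edge weights given by `σ`. -/
noncomputable def graphDist {d : ℕ} (σ : Pt d → Pt d → ℝ≥0∞) (E : Set (Sym2 (Pt d)))
    (p q : Pt d) : ℝ≥0∞ :=
  ⨅ (n : ℕ) (x : Fin (n + 1) → Pt d)
    (_ : x 0 = p ∧ x (Fin.last n) = q ∧ ∀ i : Fin n, s(x i.castSucc, x i.succ) ∈ E),
      ∑ i : Fin n, σ (x i.castSucc) (x i.succ)

end GeoSpanner

namespace GeoSpanner

/-- A flat axis-parallel rectangle in ℝ³: a product of three closed bounded
intervals, at least one of which is a single point. -/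
def IsFlatBox (B : Set (Pt 3)) : Prop :=
  ∃ a b : Pt 3, a ≤ b ∧ (∃ i, a i = b i) ∧ B = Set.Icc a b

open Set

section

variable {d : ℕ}

lemma nrm1_nonneg (x : Pt d) : 0 ≤ nrm1 x :=
  Finset.sum_nonneg fun i _ => abs_nonneg (x i)

lemma abs_apply_le_nrm1 (x : Pt d) (i : Fin d) : |x i| ≤ nrm1 x :=
  Finset.single_le_sum (f := fun j => |x j|) (fun j _ => abs_nonneg (x j)) (Finset.mem_univ i)

lemma sum_succ_sub_castSucc {m : ℕ} (u : Fin (m + 1) → ℝ) :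
    ∑ i : Fin m, (u i.succ - u i.castSucc) = u (Fin.last m) - u 0 := by
  have h₀ := Fin.sum_univ_succ u
  have h₁ := Fin.sum_univ_castSucc u
  rw [Finset.sum_sub_distrib]
  linarith

lemma le_pathLen_of_mem_Icc (nrm : Pt d → ℝ) (γ : ℝ → Pt d) {s : ℝ} (hs : s ∈ Icc (0 : ℝ) 1) :
    ENNReal.ofReal (nrm (γ s - γ 0)) + ENNReal.ofReal (nrm (γ 1 - γ s)) ≤ pathLen nrm γ := by
  let t : Fin 3 → ℝ := ![0, s, 1]
  have ht : Monotone t ∧ ∀ i, t i ∈ Icc (0 : ℝ) 1 := by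
    refine ⟨Fin.monotone_iff_le_succ.2 fun i => ?_, fun i => ?_⟩ <;>
      fin_cases i <;> simp [t, hs.1, hs.2]
  refine le_trans ?_ (le_iSup_of_le 2 (le_iSup_of_le t (le_iSup_of_le ht le_rfl)))
  simp [Fin.sum_univ_two, t]

lemma pathLen_le_of_dominated {nrm : Pt d → ℝ} {γ : ℝ → Pt d} {V : ℝ → ℝ} (hV : Monotone V)
    (hγ : ∀ a b, a ≤ b → nrm (γ b - γ a) ≤ V b - V a) :
    pathLen nrm γ ≤ ENNReal.ofReal (V 1 - V 0) := by
  refine iSup_le fun m => iSup_le fun t => iSup_le fun ⟨ht, ht01⟩ => ?_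
  have hstep : ∀ i : Fin m, t i.castSucc ≤ t i.succ := fun i => ht (Fin.castSucc_le_succ i)
  calc ∑ i : Fin m, ENNReal.ofReal (nrm (γ (t i.succ) - γ (t i.castSucc)))
      ≤ ∑ i : Fin m, ENNReal.ofReal (V (t i.succ) - V (t i.castSucc)) :=
        Finset.sum_le_sum fun i _ => ENNReal.ofReal_le_ofReal (hγ _ _ (hstep i))
    _ = ENNReal.ofReal (∑ i : Fin m, (V (t i.succ) - V (t i.castSucc))) :=
        (ENNReal.ofReal_sum_of_nonneg fun i _ => sub_nonneg.2 (hV (hstep i))).symm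
    _ ≤ ENNReal.ofReal (V 1 - V 0) := by
        rw [sum_succ_sub_castSucc fun i => V (t i)]
        exact ENNReal.ofReal_le_ofReal
          (sub_le_sub (hV (ht01 (Fin.last m)).2) (hV (ht01 0).1))

lemma IsPathIn.exists_apply_eq {F : Set (Pt d)} {p q : Pt d} {γ : ℝ → Pt d}
    (hγ : IsPathIn F p q γ) (i : Fin d) {c : ℝ} (hc : c ∈ uIcc (p i) (q i)) :
    ∃ s ∈ Icc (0 : ℝ) 1, γ s i = c := by
  obtain ⟨hcont, h0, h1, -⟩ := hγ
  have hcont_i : ContinuousOn (fun t => γ t i) (uIcc 0 1) := by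
    rw [uIcc_of_le zero_le_one]
    exact (continuous_apply i).comp_continuousOn hcont
  obtain ⟨s, hs, hsc⟩ := intermediate_value_uIcc hcont_i (by rwa [h0, h1])
  exact ⟨s, by rwa [uIcc_of_le zero_le_one] at hs, hsc⟩

lemma Fin.eq_of_forall_step_eq {α : Type*} {m : ℕ} {x : Fin (m + 1) → α} {a b : Fin (m + 1)}
    (hab : a ≤ b) (h : ∀ k : Fin m, a ≤ k.castSucc → k.succ ≤ b → x k.castSucc = x k.succ) :
    x a = x b := by
  induction b using Fin.induction with
  | zero => rw [Fin.le_zero_iff.1 hab]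
  | succ k ih =>
    rcases hab.eq_or_lt with rfl | hlt
    · rfl
    · have hak : a ≤ k.castSucc := Fin.le_castSucc_iff.2 hlt
      exact (ih hak fun j hj hjk => h j hj (hjk.trans (Fin.castSucc_le_succ k))).trans
        (h k hak le_rfl)

/-- A walk from `p` to `q` has a first and a last non-degenerate step, and they differ because
`s(p, q) ∉ E`. -/
lemma two_mul_le_graphDist {σ : Pt d → Pt d → ℝ≥0∞} {E : Set (Sym2 (Pt d))} {w : ℝ≥0∞}
    (hσ : ∀ x y, s(x, y) ∈ E → x ≠ y → w ≤ σ x y) {p q : Pt d} (hpq : p ≠ q)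
    (hE : s(p, q) ∉ E) : 2 * w ≤ graphDist σ E p q := by
  classical
  refine le_iInf fun m => le_iInf fun x => le_iInf fun ⟨hx0, hxm, hxE⟩ => ?_
  set D := Finset.univ.filter fun k : Fin m => x k.castSucc ≠ x k.succ
  have step_eq : ∀ k, k ∉ D → x k.castSucc = x k.succ := fun k hk => by simpa [D] using hk
  obtain hD | hD := D.eq_empty_or_nonempty
  · refine absurd ?_ hpq
    rw [← hx0, ← hxm]
    exact Fin.eq_of_forall_step_eq (Fin.zero_le _) fun k _ _ =>
      step_eq k (hD ▸ Finset.notMem_empty k)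
  set i := D.min' hD
  set j := D.max' hD
  have hi : x i.castSucc = p := by
    rw [← hx0]
    refine (Fin.eq_of_forall_step_eq (Fin.zero_le _) fun k _ hk => step_eq k fun hkD => ?_).symm
    exact (Fin.succ_le_castSucc_iff.1 hk).not_ge (D.min'_le k hkD)
  have hj : x j.succ = q := by
    rw [← hxm]
    refine Fin.eq_of_forall_step_eq (Fin.le_last _) fun k hk _ => step_eq k fun hkD => ?_
    exact (Fin.succ_le_castSucc_iff.1 hk).not_ge (D.le_max' k hkD)
  have hij : i ≠ j := by
    intro hij
    apply hE
    rw [← hi, ← hj, hij]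
    exact hxE j
  calc 2 * w = w + w := two_mul w
    _ ≤ σ (x i.castSucc) (x i.succ) + σ (x j.castSucc) (x j.succ) :=
        add_le_add (hσ _ _ (hxE i) (Finset.mem_filter.1 (D.min'_mem hD)).2)
          (hσ _ _ (hxE j) (Finset.mem_filter.1 (D.max'_mem hD)).2)
    _ = ∑ k ∈ ({i, j} : Finset (Fin m)), σ (x k.castSucc) (x k.succ) := by
        rw [Finset.sum_pair hij]
    _ ≤ ∑ k : Fin m, σ (x k.castSucc) (x k.succ) :=
        Finset.sum_le_sum_of_subset (Finset.subset_univ _)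

end

def axisPt (z : ℝ) : Pt 3 := ![0, 0, z]

def plate (L c : ℝ) : Set (Pt 3) := Icc ![-L, -L, c] ![L, L, c]

lemma mem_plate {L c : ℝ} {y : Pt 3} : y ∈ plate L c ↔ |y 0| ≤ L ∧ |y 1| ≤ L ∧ y 2 = c := by
  simp only [plate, mem_Icc, Pi.le_def, Fin.forall_fin_succ, Fin.isValue, Matrix.cons_val_zero,
    Matrix.cons_val_succ, Fin.succ_zero_eq_one, Matrix.cons_val_fin_one, Fin.succ_one_eq_two,
    IsEmpty.forall_iff, and_true, abs_le, le_antisymm_iff]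
  tauto

lemma isFlatBox_plate {L : ℝ} (hL : 0 ≤ L) (c : ℝ) : IsFlatBox (plate L c) := by
  refine ⟨![-L, -L, c], ![L, L, c], fun i => ?_, ⟨2, rfl⟩, rfl⟩
  fin_cases i <;> simp [hL]

lemma disjoint_plate {L c c' : ℝ} (h : c ≠ c') : Disjoint (plate L c) (plate L c') :=
  disjoint_left.2 fun _ hy hy' => h ((mem_plate.1 hy).2.2.symm.trans (mem_plate.1 hy').2.2)

lemma axisPt_notMem_plate {L c z : ℝ} (h : z ≠ c) : axisPt z ∉ plate L c :=
  fun hz => h (by simpa [axisPt] using (mem_plate.1 hz).2.2)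

lemma le_geo_axisPt_of_plate_mem {O : Finset (Set (Pt 3))} {L c z w : ℝ} (hc : plate L c ∈ O)
    (hcw : c ∈ uIcc z w) :
    ENNReal.ofReal (2 * L) ≤ geo nrm1 {x | ∀ B ∈ O, x ∉ B} (axisPt z) (axisPt w) := by
  refine le_iInf₂ fun γ hγ => ?_
  obtain ⟨s, hs, hsc⟩ := hγ.exists_apply_eq 2 (by simpa [axisPt] using hcw)
  have hfar : L ≤ |γ s 0| ∨ L ≤ |γ s 1| := by
    by_contra! h
    exact hγ.2.2.2 s hs _ hc (mem_plate.2 ⟨h.1.le, h.2.le, hsc⟩)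
  have hdist : ∀ u, L ≤ nrm1 (γ s - axisPt u) ∧ L ≤ nrm1 (axisPt u - γ s) := by
    intro u
    have h₀ := abs_apply_le_nrm1 (γ s - axisPt u) 0
    have h₁ := abs_apply_le_nrm1 (γ s - axisPt u) 1
    have h₀' := abs_apply_le_nrm1 (axisPt u - γ s) 0
    have h₁' := abs_apply_le_nrm1 (axisPt u - γ s) 1
    simp only [axisPt, Pi.sub_apply, Matrix.cons_val_zero, Matrix.cons_val_one, sub_zero,
      zero_sub, abs_neg] at h₀ h₁ h₀' h₁' ⊢
    constructor <;> rcases hfar with h | h <;> linarith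
  obtain ⟨-, h0, h1, -⟩ := hγ
  calc ENNReal.ofReal (2 * L)
      ≤ ENNReal.ofReal (nrm1 (γ s - γ 0) + nrm1 (γ 1 - γ s)) := by
        rw [h0, h1]
        exact ENNReal.ofReal_le_ofReal (by linarith [(hdist z).1, (hdist w).2])
    _ = ENNReal.ofReal (nrm1 (γ s - γ 0)) + ENNReal.ofReal (nrm1 (γ 1 - γ s)) :=
        ENNReal.ofReal_add (nrm1_nonneg _) (nrm1_nonneg _)
    _ ≤ pathLen nrm1 γ := le_pathLen_of_mem_Icc nrm1 γ hs

def ramp (t : ℝ) : ℝ := max 0 (min 1 t)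

lemma monotone_ramp : Monotone ramp :=
  monotone_const.max (monotone_const.min monotone_id)

@[fun_prop]
lemma continuous_ramp : Continuous ramp := by
  unfold ramp
  fun_prop

lemma ramp_of_nonpos {t : ℝ} (ht : t ≤ 0) : ramp t = 0 :=
  max_eq_left ((min_le_right _ _).trans ht)

lemma ramp_of_one_le {t : ℝ} (ht : 1 ≤ t) : ramp t = 1 := by
  rw [ramp, min_eq_left ht, max_eq_right zero_le_one]

/-- Out along the `x`-axis to `x = M`, up from height `z` to height `w`, and back to the
`z`-axis, each leg taking a third of the time. -/
def detour (M z w : ℝ) (t : ℝ) : Pt 3 :=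
  ![M * (ramp (3 * t) - ramp (3 * t - 2)), 0, z + (w - z) * ramp (3 * t - 1)]

lemma continuous_detour (M z w : ℝ) : Continuous (detour M z w) := by
  unfold detour
  fun_prop

lemma detour_zero (M z w : ℝ) : detour M z w 0 = axisPt z := by
  ext i
  fin_cases i <;> simp [detour, axisPt, ramp_of_nonpos]

lemma detour_one (M z w : ℝ) : detour M z w 1 = axisPt w := by
  ext i
  fin_cases i <;> norm_num [detour, axisPt, ramp_of_one_le]

lemma detour_apply_eq_or (M z w t : ℝ) :
    detour M z w t 2 = z ∨ detour M z w t 2 = w ∨ detour M z w t 0 = M := by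
  simp only [detour, Matrix.cons_val_zero, Matrix.cons_val_two, Matrix.tail_cons,
    Matrix.head_cons]
  rcases le_or_gt (3 * t) 1 with h | h
  · left
    rw [ramp_of_nonpos (by linarith)]
    ring
  rcases le_or_gt 2 (3 * t) with h' | h'
  · right; left
    rw [ramp_of_one_le (by linarith)]
    ring
  · right; right
    rw [ramp_of_one_le h.le, ramp_of_nonpos (by linarith)]
    ring

lemma pathLen_detour_le {M z w : ℝ} (hM : 0 ≤ M) (hzw : z ≤ w) :
    pathLen nrm1 (detour M z w) ≤ ENNReal.ofReal (2 * M + (w - z)) := by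
  set V : ℝ → ℝ := fun t => M * ramp (3 * t) + M * ramp (3 * t - 2) + (w - z) * ramp (3 * t - 1)
  have hdom : ∀ a b, a ≤ b → nrm1 (detour M z w b - detour M z w a) ≤ V b - V a := by
    intro a b hab
    have h₀ := mul_le_mul_of_nonneg_left (monotone_ramp (show 3 * a ≤ 3 * b by linarith)) hM
    have h₂ := mul_le_mul_of_nonneg_left
      (monotone_ramp (show 3 * a - 2 ≤ 3 * b - 2 by linarith)) hM
    have h₁ := mul_le_mul_of_nonneg_left
      (monotone_ramp (show 3 * a - 1 ≤ 3 * b - 1 by linarith)) (sub_nonneg.2 hzw)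
    simp only [nrm1, Fin.sum_univ_three, detour, V, Pi.sub_apply, Matrix.cons_val_zero,
      Matrix.cons_val_one, Matrix.cons_val_two, Matrix.tail_cons, Matrix.head_cons, sub_self,
      abs_zero, add_zero]
    rw [show M * (ramp (3 * b) - ramp (3 * b - 2)) - M * (ramp (3 * a) - ramp (3 * a - 2))
        = (M * ramp (3 * b) - M * ramp (3 * a)) - (M * ramp (3 * b - 2) - M * ramp (3 * a - 2))
        by ring, add_sub_add_left_eq_sub, abs_of_nonneg (sub_nonneg.2 h₁)]
    have hx := abs_sub (M * ramp (3 * b) - M * ramp (3 * a))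
      (M * ramp (3 * b - 2) - M * ramp (3 * a - 2))
    rw [abs_of_nonneg (sub_nonneg.2 h₀), abs_of_nonneg (sub_nonneg.2 h₂)] at hx
    linarith
  have hV : Monotone V := fun a b hab => sub_nonneg.1 ((nrm1_nonneg _).trans (hdom a b hab))
  have hV01 : V 1 - V 0 = 2 * M + (w - z) := by
    norm_num [V, ramp_of_one_le, ramp_of_nonpos]
    ring
  exact hV01 ▸ pathLen_le_of_dominated hV hdom

lemma geo_axisPt_le {O : Finset (Set (Pt 3))} {M z w : ℝ} (hM : 0 ≤ M) (hzw : z ≤ w)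
    (hO : ∀ B ∈ O, ∀ y ∈ B, y 0 < M ∧ y 2 ≠ z ∧ y 2 ≠ w) :
    geo nrm1 {x | ∀ B ∈ O, x ∉ B} (axisPt z) (axisPt w) ≤ ENNReal.ofReal (2 * M + (w - z)) := by
  have hpath : IsPathIn {x | ∀ B ∈ O, x ∉ B} (axisPt z) (axisPt w) (detour M z w) := by
    refine ⟨(continuous_detour M z w).continuousOn, detour_zero M z w, detour_one M z w,
      fun t _ B hB hmem => ?_⟩
    obtain ⟨hx, hz, hw⟩ := hO B hB _ hmem
    rcases detour_apply_eq_or M z w t with h | h | h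
    exacts [hz h, hw h, hx.ne h]
  exact (iInf₂_le _ hpath).trans (pathLen_detour_le hM hzw)

noncomputable def stackPoints (n : ℕ) : Finset (Pt 3) :=
  (Finset.range n).image fun k : ℕ => axisPt k

noncomputable def stackPlates (L : ℝ) (n : ℕ) : Finset (Set (Pt 3)) :=
  (Finset.range (n - 1)).image fun k : ℕ => plate L (k + 1 / 2)

lemma natCast_ne_add_half (a k : ℕ) : (a : ℝ) ≠ k + 1 / 2 := by
  intro h
  have : 2 * a = 2 * k + 1 := by exact_mod_cast (by linarith : (2 * a : ℝ) = 2 * k + 1)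
  omega

lemma card_stackPoints (n : ℕ) : (stackPoints n).card = n := by
  rw [stackPoints, Finset.card_image_of_injective _ fun a b hab => ?_, Finset.card_range]
  simpa [axisPt] using congrFun hab 2

lemma isFlatBox_of_mem_stackPlates {L : ℝ} (hL : 0 ≤ L) {n : ℕ} {B : Set (Pt 3)}
    (hB : B ∈ stackPlates L n) : IsFlatBox B := by
  obtain ⟨k, -, rfl⟩ := Finset.mem_image.1 hB
  exact isFlatBox_plate hL _

lemma pairwise_disjoint_stackPlates (L : ℝ) (n : ℕ) :
    (stackPlates L n : Set (Set (Pt 3))).Pairwise Disjoint := by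
  intro B₁ h₁ B₂ h₂ hne
  obtain ⟨k₁, -, rfl⟩ := Finset.mem_image.1 h₁
  obtain ⟨k₂, -, rfl⟩ := Finset.mem_image.1 h₂
  exact disjoint_plate fun h => hne (congrArg (plate L) h)

lemma notMem_of_mem_stackPoints {L : ℝ} {n : ℕ} {p : Pt 3} (hp : p ∈ stackPoints n)
    {B : Set (Pt 3)} (hB : B ∈ stackPlates L n) : p ∉ B := by
  obtain ⟨a, -, rfl⟩ := Finset.mem_image.1 hp
  obtain ⟨k, -, rfl⟩ := Finset.mem_image.1 hB
  exact axisPt_notMem_plate (natCast_ne_add_half a k)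

lemma le_geo_stackPoints {L : ℝ} {n i j : ℕ} (hi : i < n) (hj : j < n) (hij : i ≠ j) :
    ENNReal.ofReal (2 * L) ≤
      geo nrm1 {x | ∀ B ∈ stackPlates L n, x ∉ B} (axisPt i) (axisPt j) := by
  refine le_geo_axisPt_of_plate_mem (c := min i j + 1 / 2)
    (Finset.mem_image.2 ⟨min i j, Finset.mem_range.2 (by omega), by push_cast; rfl⟩) ?_
  rcases hij.lt_or_gt with h | h
  · have : (i : ℝ) + 1 ≤ j := by exact_mod_cast h
    rw [min_eq_left h.le, mem_uIcc]
    left; constructor <;> linarith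
  · have : (j : ℝ) + 1 ≤ i := by exact_mod_cast h
    rw [min_eq_right h.le, mem_uIcc]
    right; constructor <;> linarith

lemma geo_stackPoints_le {L : ℝ} (hL : 0 ≤ L) {n i j : ℕ} (hij : i < j) (hj : j < n) :
    geo nrm1 {x | ∀ B ∈ stackPlates L n, x ∉ B} (axisPt i) (axisPt j) ≤
      ENNReal.ofReal (2 * L + (n + 2)) := by
  have hij' : (i : ℝ) < j := by exact_mod_cast hij
  have hjn : (j : ℝ) + 1 ≤ n := by exact_mod_cast hj
  refine (geo_axisPt_le (M := L + 1) (by linarith) hij'.le fun B hB y hy => ?_).trans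
    (ENNReal.ofReal_le_ofReal (by linarith [(Nat.cast_nonneg i : (0 : ℝ) ≤ i)]))
  obtain ⟨k, -, rfl⟩ := Finset.mem_image.1 hB
  obtain ⟨hy0, -, hy2⟩ := mem_plate.1 hy
  rw [hy2]
  exact ⟨by linarith [le_abs_self (y 0)], (natCast_ne_add_half i k).symm,
    (natCast_ne_add_half j k).symm⟩

lemma two_mul_le_graphDist_stackPoints (L : ℝ) {n : ℕ} {E : Set (Sym2 (Pt 3))}
    (hE : ∀ e ∈ E, ∀ x ∈ e, x ∈ stackPoints n) {p q : Pt 3} (hpq : p ≠ q) (hpqE : s(p, q) ∉ E) :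
    2 * ENNReal.ofReal (2 * L) ≤ graphDist (geo nrm1 {x | ∀ B ∈ stackPlates L n, x ∉ B}) E p q := by
  refine two_mul_le_graphDist (fun x y hxy hne => ?_) hpq hpqE
  obtain ⟨i, hi, rfl⟩ := Finset.mem_image.1 (hE _ hxy x (Sym2.mem_mk_left x y))
  obtain ⟨j, hj, rfl⟩ := Finset.mem_image.1 (hE _ hxy y (Sym2.mem_mk_right _ y))
  exact le_geo_stackPoints (Finset.mem_range.1 hi) (Finset.mem_range.1 hj)
    fun h => hne (by rw [h])

lemma ofReal_mul_geo_lt_graphDist_stackPoints {ε : ℝ} (hε : 0 < ε) {n i j : ℕ} (hij : i < j)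
    (hj : j < n) {E : Set (Sym2 (Pt 3))} (hE : ∀ e ∈ E, ∀ x ∈ e, x ∈ stackPoints n)
    (hijE : s(axisPt i, axisPt j) ∉ E) :
    ENNReal.ofReal (2 - ε) *
        geo nrm1 {x | ∀ B ∈ stackPlates ((n + 2) / ε) n, x ∉ B} (axisPt i) (axisPt j) <
      graphDist (geo nrm1 {x | ∀ B ∈ stackPlates ((n + 2) / ε) n, x ∉ B}) E
        (axisPt i) (axisPt j) := by
  set L : ℝ := (n + 2) / ε
  have hL : 0 < L := by positivity
  -- with `ε L = n + 2` one has `(2 - ε) (2L + n + 2) = 4L - ε (n + 2)`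
  have hεL : ε * L = n + 2 := mul_div_cancel₀ _ hε.ne'
  have hne : axisPt i ≠ axisPt j := fun h => hij.ne (by simpa [axisPt] using congrFun h 2)
  calc ENNReal.ofReal (2 - ε) * geo nrm1 {x | ∀ B ∈ stackPlates L n, x ∉ B} (axisPt i) (axisPt j)
      ≤ ENNReal.ofReal (2 - ε) * ENNReal.ofReal (2 * L + (n + 2)) :=
        mul_le_mul_right (geo_stackPoints_le hL.le hij hj) _
    _ = ENNReal.ofReal ((2 - ε) * (2 * L + (n + 2))) := (ENNReal.ofReal_mul' (by positivity)).symm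
    _ < ENNReal.ofReal (2 * (2 * L)) :=
        (ENNReal.ofReal_lt_ofReal_iff (by positivity)).2 (by nlinarith)
    _ = 2 * ENNReal.ofReal (2 * L) := by rw [ENNReal.ofReal_mul zero_le_two, ENNReal.ofReal_ofNat]
    _ ≤ graphDist (geo nrm1 {x | ∀ B ∈ stackPlates L n, x ∉ B}) E (axisPt i) (axisPt j) :=
        two_mul_le_graphDist_stackPoints L hE hne hijE

theorem statement_7_general (ε : ℝ) (hε0 : 0 < ε) (n : ℕ) :
    ∃ (P : Finset (Pt 3)) (O : Finset (Set (Pt 3))),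
      P.card = n ∧
      (∀ B ∈ O, IsFlatBox B) ∧
      (O : Set (Set (Pt 3))).Pairwise Disjoint ∧
      (∀ p ∈ P, ∀ B ∈ O, p ∉ B) ∧
      ∀ E : Set (Sym2 (Pt 3)),
        (∀ e ∈ E, ∀ x ∈ e, x ∈ P) →
        (∃ p ∈ P, ∃ q ∈ P, p ≠ q ∧ s(p, q) ∉ E) →
        ∃ p ∈ P, ∃ q ∈ P, p ≠ q ∧ s(p, q) ∉ E ∧
          ENNReal.ofReal (2 - ε) * geo nrm1 {x | ∀ B ∈ O, x ∉ B} p q <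
            graphDist (geo nrm1 {x | ∀ B ∈ O, x ∉ B}) E p q := by
  have hL : 0 ≤ ((n : ℝ) + 2) / ε := by positivity
  refine ⟨stackPoints n, stackPlates ((n + 2) / ε) n, card_stackPoints n,
    fun B hB => isFlatBox_of_mem_stackPlates hL hB, pairwise_disjoint_stackPlates _ n,
    fun p hp B hB => notMem_of_mem_stackPoints hp hB, ?_⟩
  rintro E hE ⟨p, hp, q, hq, hpq, hpqE⟩
  obtain ⟨i, hi, rfl⟩ := Finset.mem_image.1 hp
  obtain ⟨j, hj, rfl⟩ := Finset.mem_image.1 hq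
  rcases (show i ≠ j by rintro rfl; exact hpq rfl).lt_or_gt with h | h
  · exact ⟨_, hp, _, hq, hpq, hpqE,
      ofReal_mul_geo_lt_graphDist_stackPoints hε0 h (Finset.mem_range.1 hj) hE hpqE⟩
  · rw [Sym2.eq_swap] at hpqE
    exact ⟨_, hq, _, hp, hpq.symm, hpqE,
      ofReal_mul_geo_lt_graphDist_stackPoints hε0 h (Finset.mem_range.1 hi) hE hpqE⟩

/-- a lower-bound configuration in ℝ³ amid flat axis-parallel
rectangle obstacles in which every non-complete graph has spanning ratio
larger than 2 − ε. Here paths must avoid the obstacles themselves. -/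
theorem statement_7 (ε : ℝ) (hε0 : 0 < ε) (hε1 : ε < 1) (n : ℕ) (hn : 2 ≤ n) :
    ∃ (P : Finset (Pt 3)) (O : Finset (Set (Pt 3))),
      P.card = n ∧
      (∀ B ∈ O, IsFlatBox B) ∧
      (O : Set (Set (Pt 3))).Pairwise Disjoint ∧
      (∀ p ∈ P, ∀ B ∈ O, p ∉ B) ∧
      ∀ E : Set (Sym2 (Pt 3)),
        (∀ e ∈ E, ∀ x ∈ e, x ∈ P) →
        (∃ p ∈ P, ∃ q ∈ P, p ≠ q ∧ s(p, q) ∉ E) →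
        ∃ p ∈ P, ∃ q ∈ P, p ≠ q ∧ s(p, q) ∉ E ∧
          ENNReal.ofReal (2 - ε) * geo nrm1 {x | ∀ B ∈ O, x ∉ B} p q <
            graphDist (geo nrm1 {x | ∀ B ∈ O, x ∉ B}) E p q :=
  statement_7_general ε hε0 n

end GeoSpanner
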